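/- arXiv:1202.0915 — 9 statements merged into one kernel-verified Lean document; each statement's English description precedes it below -/
import Mathlib

section
/- For every relation r : PX ⇸ Y one has r ⊆ Δ_Y∘r and r ⊆ r∘Δ_X. Moreover, Δ_Y∘r = r and r∘Δ_X = r hold if and only if r is monotone. -/
/-- Composite of relations: `x (s·r) z` iff there is `y` with `x r y` and `y s z`. -/
def RComp {X Y Z : Type*} (s : Y → Z → Prop) (r : X → Y → Prop) : X → Z → Prop :=
  fun x z => ∃ y, r x y ∧ s y z

/-- A function viewed as a relation: `x f y` iff `f x = y`. -/
def funRel {X Y : Type*} (f : X → Y) : X → Y → Prop := fun x y => f x = y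

/-- The "inverse image relation" `f°` of a function: `y f° x` iff `f x = y`. -/
def opRel {X Y : Type*} (f : X → Y) : Y → X → Prop := fun y x => f x = y

/-- Inclusion of relations (pointwise implication). -/
def RelIncl {X Y : Type*} (r s : X → Y → Prop) : Prop := ∀ x y, r x y → s x y

/-- The powerset lifting of a relation: `A (P̂r) B` iff every `y ∈ B` is related
to some `x ∈ A`. -/
def Phat {X Y : Type*} (r : X → Y → Prop) : Set X → Set Y → Prop :=
  fun A B => ∀ y ∈ B, ∃ x ∈ A, r x y

/-- `Δ_X : PX ⇸ X`, `A Δ_X x` iff `x ∈ A`. -/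
def DeltaRel (X : Type*) : Set X → X → Prop := fun A x => x ∈ A

/-- A relation `r : PX ⇸ Y` is monotone if `A r y` and `A ⊆ B` imply `B r y`. -/
def MonoRel {X Y : Type*} (r : Set X → Y → Prop) : Prop :=
  ∀ (A B : Set X) (y : Y), r A y → A ⊆ B → r B y

/-- The composite `s∘r = s·(P̂r)·m_X°` of relations `r : PX ⇸ Y` and `s : PY ⇸ Z`:
`A (s∘r) z` iff there are a family `𝒜` with `⋃₀𝒜 = A` and `B ⊆ Y` with
`𝒜 (P̂r) B` and `B s z`. -/
def KComp {X Y Z : Type*} (s : Set Y → Z → Prop) (r : Set X → Y → Prop) : Set X → Z → Prop :=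
  fun A z => ∃ (𝒜 : Set (Set X)) (B : Set Y),
    ⋃₀ 𝒜 = A ∧ (∀ y ∈ B, ∃ A' ∈ 𝒜, r A' y) ∧ s B z

/-- A consequence relation on `X`: reflexivity, weakening and cut. -/
def IsConsRel {X : Type*} (r : Set X → X → Prop) : Prop :=
  (∀ (A : Set X) (x : X), x ∈ A → r A x) ∧
  (∀ (A B : Set X) (x : X), r A x → A ⊆ B → r B x) ∧
  (∀ (A B : Set X) (x : X), (∀ y ∈ B, r A y) → r B x → r A x)

/-- `f` is consequence preserving: `A ⊢ x` implies `f(A) ⊩ f(x)`. -/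
def ConsPreserving {X Y : Type*} (r : Set X → X → Prop) (s : Set Y → Y → Prop)
    (f : X → Y) : Prop :=
  ∀ (A : Set X) (x : X), r A x → s (f '' A) (f x)

/-- `f_# : PX ⇸ Y`, `A f_# y` iff `y ∈ f(A)`. -/
def lowSharp {X Y : Type*} (f : X → Y) : Set X → Y → Prop := fun A y => y ∈ f '' A

/-- `f^# : PY ⇸ X`, `B f^# x` iff `f(x) ∈ B`. -/
def upSharp {X Y : Type*} (f : X → Y) : Set Y → X → Prop := fun B x => f x ∈ B

/-- `𝒞(r) : PX → PY`, `A ↦ {y | A r y}`. -/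
def Cmap {X Y : Type*} (r : Set X → Y → Prop) : Set X → Set Y := fun A => {y | r A y}

/-- `r ⊆ Δ_Y∘r`, `r ⊆ r∘Δ_X`, and both are equalities iff `r` is monotone. -/
theorem stmt5 {X Y : Type*} (r : Set X → Y → Prop) :
    RelIncl r (KComp (DeltaRel Y) r) ∧
    RelIncl r (KComp r (DeltaRel X)) ∧
    ((KComp (DeltaRel Y) r = r ∧ KComp r (DeltaRel X) = r) ↔ MonoRel r) := by
  have h1 : RelIncl r (KComp (DeltaRel Y) r) := by
    intro A y h
    exact ⟨{A}, {y}, Set.sUnion_singleton A,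
      fun y' hy' => ⟨A, rfl, by simpa [Set.mem_singleton_iff.mp hy'] using h⟩, rfl⟩
  have h2 : RelIncl r (KComp r (DeltaRel X)) := by
    intro A y h
    exact ⟨{A}, A, Set.sUnion_singleton A, fun x hx => ⟨A, rfl, hx⟩, h⟩
  refine ⟨h1, h2, ?_, ?_⟩
  · rintro ⟨e1, _⟩ A B y hA hAB
    rw [← e1]
    exact ⟨{A, B}, {y}, by rw [Set.sUnion_pair]; exact Set.union_eq_self_of_subset_left hAB,
      fun y' hy' => ⟨A, Or.inl rfl, by rwa [Set.mem_singleton_iff.mp hy']⟩, rfl⟩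
  · intro hm
    constructor
    · funext A y
      apply propext
      constructor
      · rintro ⟨𝒜, B, hU, hB, hy⟩
        obtain ⟨A', hA', hr⟩ := hB y hy
        exact hm A' A y hr (hU ▸ Set.subset_sUnion_of_mem hA')
      · exact h1 A y
    · funext A y
      apply propext
      constructor
      · rintro ⟨𝒜, B, hU, hB, hr⟩
        refine hm B A y hr (fun x hx => ?_)
        obtain ⟨A', hA', hxA'⟩ := hB x hx
        exact hU ▸ Set.subset_sUnion_of_mem hA' hxA'
      · exact h2 A y
end

section
/- For every set X the relation Δ_X : PX ⇸ X is monotone; if r : PX ⇸ Y and s : PY ⇸ Z are monotone relations, then the composite s∘r : PX ⇸ Z is monotone; and the composition ∘ is associative on monotone relations: for monotone r : PX ⇸ Y, s : PY ⇸ Z, t : PZ ⇸ W one has (t∘s)∘r = t∘(s∘r). -/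
/-- `Δ_X` is monotone, the composite `s∘r` of monotone relations is monotone,
and `∘` is associative on monotone relations. -/
theorem stmt6 {W X Y Z : Type*} (r : Set X → Y → Prop) (s : Set Y → Z → Prop)
    (t : Set Z → W → Prop) (hr : MonoRel r) (hs : MonoRel s) (ht : MonoRel t) :
    MonoRel (DeltaRel X) ∧
    MonoRel (KComp s r) ∧
    KComp (KComp t s) r = KComp t (KComp s r) := by

  refine ⟨?_, ?_, ?_⟩
  · intro A B x hx hAB
    exact hAB hx
  · rintro A A' z ⟨𝒜, B, hU, hP, hsz⟩ hAA
    refine ⟨insert A' 𝒜, B, ?_, fun y hy => ?_, hsz⟩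
    · rw [Set.sUnion_insert, hU]
      exact Set.union_eq_self_of_subset_right hAA
    · obtain ⟨A'', h1, h2⟩ := hP y hy
      exact ⟨A'', Set.mem_insert_of_mem _ h1, h2⟩
  · funext A w
    apply propext
    constructor
    · rintro ⟨𝒜, B, hU, hP, ℬ, C, hUB, hPB, htC⟩
      refine ⟨{A}, C, by simp, fun z hz => ?_, htC⟩
      obtain ⟨B', hB'ℬ, hsB'⟩ := hPB z hz
      refine ⟨A, rfl, 𝒜, B', hU, fun y hy => ?_, hsB'⟩
      exact hP y (hUB ▸ Set.subset_sUnion_of_mem hB'ℬ hy)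
    · rintro ⟨𝒜', C, hU, hP, htC⟩
      choose Az hAz hKC using hP
      choose F B hUF hPF hsB using hKC
      refine ⟨𝒜' ∪ {A'' | ∃ z hz, A'' ∈ F z hz},
        {y | ∃ z hz, y ∈ B z hz}, ?_, ?_, ?_⟩
      · apply Set.Subset.antisymm
        · rintro x ⟨A'', hA'', hx⟩
          rcases hA'' with h | ⟨z, hz, hF⟩
          · exact hU ▸ ⟨A'', h, hx⟩
          · have : x ∈ Az z hz := (hUF z hz) ▸ ⟨A'', hF, hx⟩
            exact hU ▸ ⟨Az z hz, hAz z hz, this⟩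
        · intro x hx
          obtain ⟨A'', h, hx'⟩ := hU ▸ hx
          exact ⟨A'', Or.inl h, hx'⟩
      · rintro y ⟨z, hz, hy⟩
        obtain ⟨A'', hA'', hr'⟩ := hPF z hz y hy
        exact ⟨A'', Or.inr ⟨z, hz, hA''⟩, hr'⟩
      · refine ⟨{B'' | ∃ z hz, B'' = B z hz}, C, ?_, fun z hz => ?_, htC⟩
        · ext y
          constructor
          · rintro ⟨B'', ⟨z, hz, rfl⟩, hy⟩
            exact ⟨z, hz, hy⟩
          · rintro ⟨z, hz, hy⟩
            exact ⟨B z hz, ⟨z, hz, rfl⟩, hy⟩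
        · exact ⟨B z hz, ⟨z, hz, rfl⟩, hsB z hz⟩
end

section
/- A relation ⊢ : PX ⇸ X is a consequence relation on X if and only if Δ_X ⊆ ⊢ and ⊢∘⊢ ⊆ ⊢. -/
/-- `⊢ : PX ⇸ X` is a consequence relation iff `Δ_X ⊆ ⊢` and `⊢∘⊢ ⊆ ⊢`. -/
theorem stmt7 {X : Type*} (vd : Set X → X → Prop) :
    IsConsRel vd ↔ (RelIncl (DeltaRel X) vd ∧ RelIncl (KComp vd vd) vd) := by
  constructor
  · rintro ⟨hrefl, hmono, hcut⟩
    refine ⟨fun A x hx => hrefl A x hx, ?_⟩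
    rintro A z ⟨𝒜, B, hU, hB, hz⟩
    refine hcut A B z (fun y hy => ?_) hz
    obtain ⟨A', hA', hA'y⟩ := hB y hy
    exact hmono A' A y hA'y (hU ▸ Set.subset_sUnion_of_mem hA')
  · rintro ⟨hdelta, hcomp⟩
    refine ⟨fun A x hx => hdelta A x hx, ?_, ?_⟩
    · intro A B x hAx hAB
      refine hcomp B x ⟨{A, B}, A, ?_, ?_, hAx⟩
      · simp [Set.sUnion_pair, Set.union_eq_self_of_subset_left hAB]
      · exact fun y hy => ⟨A, Or.inl rfl, hdelta A y hy⟩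
    · intro A B x hAB hBx
      exact hcomp A x ⟨{A}, B, by simp, fun y hy => ⟨A, rfl, hAB y hy⟩, hBx⟩
end

section
/- Let f : X → Y be a function and let r : PZ ⇸ Y and s : PY ⇸ Z be monotone relations. Then f^#∘r = f°·r and s∘f_# = s·Pf, where f is viewed as a relation. -/
/-- `f^#∘r = f°·r` and `s∘f_# = s·Pf` for monotone `r : PZ ⇸ Y`, `s : PY ⇸ Z`. -/
theorem stmt8 {X Y Z : Type*} (f : X → Y) (r : Set Z → Y → Prop) (s : Set Y → Z → Prop)
    (hr : MonoRel r) (hs : MonoRel s) :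
    KComp (upSharp f) r = RComp (opRel f) r ∧
    KComp s (lowSharp f) = RComp s (funRel (Set.image f)) := by
  constructor
  · funext A x
    apply propext
    constructor
    · rintro ⟨𝒜, B, hA, hB, hfx⟩
      obtain ⟨A', hA', hrA'⟩ := hB (f x) hfx
      exact ⟨f x, hr A' A (f x) hrA' (hA ▸ Set.subset_sUnion_of_mem hA'), rfl⟩
    · rintro ⟨y, hry, hfy⟩
      exact ⟨{A}, {y}, Set.sUnion_singleton A,
        fun y' hy' => ⟨A, rfl, by rwa [Set.mem_singleton_iff.mp hy']⟩,
        by simpa [upSharp, hfy]⟩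
  · funext A z
    apply propext
    constructor
    · rintro ⟨𝒜, B, hA, hB, hsB⟩
      refine ⟨f '' A, rfl, hs B (f '' A) z hsB ?_⟩
      intro y hy
      obtain ⟨A', hA', hfy⟩ := hB y hy
      exact Set.image_mono (hA ▸ Set.subset_sUnion_of_mem hA') hfy
    · rintro ⟨B, hB, hsB⟩
      exact ⟨{A}, f '' A, Set.sUnion_singleton A,
        fun y hy => ⟨A, rfl, hy⟩, hB ▸ hsB⟩
end

section
/- Let f : X → Y be a map between abstract logics (X,⊢) and (Y,⊩). Then the following are equivalent: (i) f is consequence preserving; (ii) f·⊢ ⊆ ⊩·Pf; (iii) ⊢ ⊆ f°·⊩·Pf; (iv) ⊢·(Pf)° ⊆ f°·⊩; (v) ⊢ ⊆ f^#∘⊩∘f_#; (vi) ⊢∘f^# ⊆ f^#∘⊩; (vii) f_#∘⊢ ⊆ ⊩∘f_#. -/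
/-- Characterisations of consequence preserving maps. -/
theorem stmt11 {X Y : Type*} (vd : Set X → X → Prop) (vd' : Set Y → Y → Prop)
    (hX : IsConsRel vd) (hY : IsConsRel vd') (f : X → Y) :
    List.TFAE [
      ConsPreserving vd vd' f,
      RelIncl (RComp (funRel f) vd) (RComp vd' (funRel (Set.image f))),
      RelIncl vd (RComp (opRel f) (RComp vd' (funRel (Set.image f)))),
      RelIncl (RComp vd (opRel (Set.image f))) (RComp (opRel f) vd'),
      RelIncl vd (KComp (upSharp f) (KComp vd' (lowSharp f))),
      RelIncl (KComp vd (upSharp f)) (KComp (upSharp f) vd'),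
      RelIncl (KComp (lowSharp f) vd) (KComp vd' (lowSharp f))
    ] := by

  obtain ⟨hXr, hXw, hXc⟩ := hX
  obtain ⟨hYr, hYw, hYc⟩ := hY
  tfae_have 1 → 2 := by
    rintro h A y ⟨x, hvd, hfx⟩
    exact ⟨f '' A, rfl, hfx ▸ h A x hvd⟩
  tfae_have 2 → 1 := by
    intro h A x hvd
    obtain ⟨B, hB, hs⟩ := h A (f x) ⟨x, hvd, rfl⟩
    exact hB ▸ hs
  tfae_have 1 → 3 := by
    intro h A x hvd
    exact ⟨f x, ⟨f '' A, rfl, h A x hvd⟩, rfl⟩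
  tfae_have 3 → 1 := by
    intro h A x hvd
    obtain ⟨y, ⟨B, hB, hs⟩, hy⟩ := h A x hvd
    subst hy; exact hB ▸ hs
  tfae_have 1 → 4 := by
    rintro h B x ⟨A, hA, hvd⟩
    exact ⟨f x, hA ▸ h A x hvd, rfl⟩
  tfae_have 4 → 1 := by
    intro h A x hvd
    obtain ⟨y, hs, hy⟩ := h (f '' A) x ⟨A, rfl, hvd⟩
    subst hy; exact hs
  tfae_have 1 → 5 := by
    intro h A x hvd
    refine ⟨{A}, {f x}, Set.sUnion_singleton A, ?_, rfl⟩
    rintro y rfl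
    exact ⟨A, rfl, {A}, f '' A, Set.sUnion_singleton A,
      fun b hb => ⟨A, rfl, hb⟩, h A x hvd⟩
  tfae_have 5 → 1 := by
    intro h A x hvd
    obtain ⟨𝒜, B, hU, hmid, hfx⟩ := h A x hvd
    obtain ⟨A', hA', ℬ, C, hU', hmid', hvd'⟩ := hmid (f x) hfx
    refine hYw C (f '' A) (f x) hvd' ?_
    rintro c hc
    obtain ⟨A'', hA'', a, ha, rfl⟩ := hmid' c hc
    refine ⟨a, ?_, rfl⟩
    have : a ∈ ⋃₀ 𝒜 := ⟨A', hA', hU' ▸ ⟨A'', hA'', ha⟩⟩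
    exact hU ▸ this
  tfae_have 1 → 6 := by
    rintro h B x ⟨ℬ, A, hU, hmid, hvd⟩
    have him : f '' A ⊆ B := by
      rintro y ⟨a, ha, rfl⟩
      obtain ⟨B', hB', hfa⟩ := hmid a ha
      exact hU ▸ ⟨B', hB', hfa⟩
    refine ⟨{B}, {f x}, Set.sUnion_singleton B, ?_, rfl⟩
    rintro y rfl
    exact ⟨B, rfl, hYw (f '' A) B (f x) (h A x hvd) him⟩
  tfae_have 6 → 1 := by
    intro h A x hvd
    obtain ⟨ℬ, B', hU, hmid, hfx⟩ :=
      h (f '' A) x ⟨{f '' A}, A, Set.sUnion_singleton _,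
        fun a ha => ⟨f '' A, rfl, ⟨a, ha, rfl⟩⟩, hvd⟩
    obtain ⟨B'', hB'', hvd'⟩ := hmid (f x) hfx
    refine hYw B'' (f '' A) (f x) hvd' ?_
    intro b hb
    exact hU ▸ ⟨B'', hB'', hb⟩
  tfae_have 1 → 7 := by
    rintro h A y ⟨𝒜, C, hU, hmid, c, hc, rfl⟩
    obtain ⟨A', hA', hvd⟩ := hmid c hc
    have hvdA : vd A c := hXw A' A c hvd (by intro a ha; exact hU ▸ ⟨A', hA', ha⟩)
    exact ⟨{A}, f '' A, Set.sUnion_singleton A, fun b hb => ⟨A, rfl, hb⟩, h A c hvdA⟩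
  tfae_have 7 → 1 := by
    intro h A x hvd
    obtain ⟨ℬ, B, hU, hmid, hvd'⟩ :=
      h A (f x) ⟨{A}, {x}, Set.sUnion_singleton A,
        (by rintro x' rfl; exact ⟨A, rfl, hvd⟩), ⟨x, rfl, rfl⟩⟩
    refine hYw B (f '' A) (f x) hvd' ?_
    intro b hb
    obtain ⟨A', hA', a, ha, rfl⟩ := hmid b hb
    exact ⟨a, hU ▸ ⟨A', hA', ha⟩, rfl⟩
  tfae_finish
end

section
/- The assignment 𝒞 preserves the compositional structure of monotone relations: (1) 𝒞(Δ_X) is the identity map on PX; (2) for monotone relations r : PX ⇸ Y and s : PY ⇸ Z, 𝒞(s∘r) = 𝒞(s)∘𝒞(r) (composition of maps); (3) for monotone relations r, r' : PX ⇸ Y, one has r ⊆ r' if and only if 𝒞(r)(A) ⊆ 𝒞(r')(A) for all A ⊆ X. -/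
/-- `𝒞` preserves identities, composition and the order of monotone relations. -/
theorem stmt13 {X Y Z : Type*} (r r' : Set X → Y → Prop) (s : Set Y → Z → Prop)
    (hr : MonoRel r) (hr' : MonoRel r') (hs : MonoRel s) :
    Cmap (DeltaRel X) = id ∧
    Cmap (KComp s r) = Cmap s ∘ Cmap r ∧
    (RelIncl r r' ↔ ∀ A : Set X, Cmap r A ⊆ Cmap r' A) := by
  refine ⟨?_, ?_, ?_⟩
  · funext A
    ext x
    rfl
  · funext A
    ext z
    constructor
    · rintro ⟨𝒜, B, hUnion, hB, hsB⟩
      refine hs B (Cmap r A) z hsB ?_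
      intro y hy
      obtain ⟨A', hA', hrA'⟩ := hB y hy
      exact hr A' A y hrA' (hUnion ▸ Set.subset_sUnion_of_mem hA')
    · intro hz
      exact ⟨{A}, Cmap r A, by simp, fun y hy => ⟨A, rfl, hy⟩, hz⟩
  · constructor
    · intro h A y hy
      exact h A y hy
    · intro h A y hy
      exact h A hy
end

section
/- Let f : X → Y be a consequence preserving map between abstract logics (X,⊢) and (Y,⊩). Then f is open if and only if f^#∘⊩ = ⊢∘f^#. -/
/-- A consequence preserving map `f` is open iff `f^#∘⊩ = ⊢∘f^#`. -/
theorem stmt16 {X Y : Type*} (vd : Set X → X → Prop) (vd' : Set Y → Y → Prop)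
    (hX : IsConsRel vd) (hY : IsConsRel vd') (f : X → Y)
    (hf : ConsPreserving vd vd' f) :
    (∀ (x : X) (B : Set Y), vd' B (f x) → ∃ A : Set X, vd A x ∧ f '' A ⊆ B) ↔
      KComp (upSharp f) vd' = KComp vd (upSharp f) := by
  obtain ⟨-, hw', -⟩ := hY
  constructor
  · intro hopen
    funext A z
    apply propext
    constructor
    · rintro ⟨𝒜, B, rfl, h1, h2⟩
      obtain ⟨A', hA', hvd⟩ := h1 (f z) h2
      have : vd' (⋃₀ 𝒜) (f z) := hw' A' _ _ hvd (Set.subset_sUnion_of_mem hA')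
      obtain ⟨C, hC, hCsub⟩ := hopen z _ this
      exact ⟨{⋃₀ 𝒜}, C, by simp, fun x hx => ⟨_, rfl, hCsub ⟨x, hx, rfl⟩⟩, hC⟩
    · rintro ⟨𝒜, B, rfl, h1, h2⟩
      refine ⟨{⋃₀ 𝒜}, {f z}, by simp, ?_, rfl⟩
      rintro y rfl
      refine ⟨_, rfl, hw' (f '' B) _ _ (hf B z h2) ?_⟩
      rintro - ⟨x, hx, rfl⟩
      obtain ⟨A', hA', hfx⟩ := h1 x hx
      exact Set.subset_sUnion_of_mem hA' hfx
  · intro heq x B hB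
    have h1 : KComp (upSharp f) vd' B x :=
      ⟨{B}, {f x}, by simp, by rintro y rfl; exact ⟨B, rfl, hB⟩, rfl⟩
    rw [heq] at h1
    obtain ⟨𝒜, C, rfl, h2, h3⟩ := h1
    refine ⟨C, h3, ?_⟩
    rintro - ⟨c, hc, rfl⟩
    obtain ⟨A', hA', hfc⟩ := h2 c hc
    exact Set.subset_sUnion_of_mem hA' hfc
end

section
/- The assignment 𝒰 preserves the compositional structure: (1) 𝒰(Δ_X) = η_X; (2) for monotone relations r : PX ⇸ Y and s : PY ⇸ Z, 𝒰(s∘r) = 𝒰(r)*𝒰(s); (3) for monotone relations r, r' : PX ⇸ Y, one has r ⊆ r' if and only if 𝒰(r)(y) ⊆ 𝒰(r')(y) for all y ∈ Y. -/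
/-- A family `𝒜` of subsets of `X` is up-closed. -/
def UpClosed {X : Type*} (𝒜 : Set (Set X)) : Prop :=
  ∀ ⦃A B : Set X⦄, A ∈ 𝒜 → A ⊆ B → B ∈ 𝒜

/-- `UX`: the up-closed families of subsets of `X`. -/
abbrev UpSet (X : Type*) := {𝒜 : Set (Set X) // UpClosed 𝒜}

/-- `Uf : UX → UY`, `𝒜 ↦ {B | f⁻¹(B) ∈ 𝒜}`. -/
def Umap {X Y : Type*} (f : X → Y) (𝒜 : UpSet X) : UpSet Y :=
  ⟨{B : Set Y | f ⁻¹' B ∈ 𝒜.1},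
    fun _ _ hB hBB' => 𝒜.2 hB (Set.preimage_mono hBB')⟩

/-- `η_X : X → UX`, `x ↦ {A | x ∈ A}`. -/
def etaU {X : Type*} (x : X) : UpSet X :=
  ⟨{A : Set X | x ∈ A}, fun _ _ hA hAB => hAB hA⟩

/-- `A^# = {𝒜 ∈ UX | A ∈ 𝒜}`. -/
def sharpSet {X : Type*} (A : Set X) : Set (UpSet X) := {𝒜 : UpSet X | A ∈ 𝒜.1}

/-- `μ_X : UUX → UX`, `𝔄 ↦ {A | A^# ∈ 𝔄}`. -/
def muU {X : Type*} (𝔄 : UpSet (UpSet X)) : UpSet X :=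
  ⟨{A : Set X | sharpSet A ∈ 𝔄.1},
    fun _ B hA hAB => 𝔄.2 hA (fun 𝒜 h𝒜 => 𝒜.2 h𝒜 hAB)⟩

/-- Kleisli composition `ρ*σ = μ_X ∘ Uρ ∘ σ` for `ρ : Y → UX`, `σ : Z → UY`. -/
def kleisliU {X Y Z : Type*} (ρ : Y → UpSet X) (σ : Z → UpSet Y) : Z → UpSet X :=
  fun z => muU (Umap ρ (σ z))

theorem monoDeltaRel {X : Type*} : MonoRel (DeltaRel X) :=
  fun _ _ _ hx h => h hx

theorem monoKComp {X Y Z : Type*} (s : Set Y → Z → Prop) (r : Set X → Y → Prop)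
    (hs : MonoRel s) (hr : MonoRel r) : MonoRel (KComp s r) := by
  rintro A A' z ⟨𝒜, B, hU, h1, h2⟩ hAA'
  refine ⟨insert A' 𝒜, B, ?_, ?_, h2⟩
  · rw [Set.sUnion_insert, hU]
    exact Set.union_eq_left.mpr hAA'
  · intro y hy
    obtain ⟨A'', hA'', hrA⟩ := h1 y hy
    exact ⟨A'', Set.mem_insert_of_mem _ hA'', hrA⟩

/-- `𝒰(r) : Y → UX`, `y ↦ {A | A r y}`, for a monotone relation `r : PX ⇸ Y`. -/
def UrelM {X Y : Type*} (r : Set X → Y → Prop) (hr : MonoRel r) (y : Y) : UpSet X :=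
  ⟨{A : Set X | r A y}, fun A B hA hAB => hr A B y hA hAB⟩

/-- `𝒰` preserves identities, composition and the order:
`𝒰(Δ_X) = η_X`, `𝒰(s∘r) = 𝒰(r)*𝒰(s)`, and `r ⊆ r' ↔ 𝒰(r) ≤ 𝒰(r')` pointwise. -/
theorem stmt17 {X Y Z : Type*} (r r' : Set X → Y → Prop) (s : Set Y → Z → Prop)
    (hr : MonoRel r) (hr' : MonoRel r') (hs : MonoRel s) :
    UrelM (DeltaRel X) monoDeltaRel = etaU ∧
    UrelM (KComp s r) (monoKComp s r hs hr) = kleisliU (UrelM r hr) (UrelM s hs) ∧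
    (RelIncl r r' ↔ ∀ y : Y, (UrelM r hr y).1 ⊆ (UrelM r' hr' y).1) := by
  refine ⟨?_, ?_, ?_⟩
  · funext x
    apply Subtype.ext
    rfl
  · funext z
    apply Subtype.ext
    ext A
    show KComp s r A z ↔ _
    constructor
    · rintro ⟨𝒜, B, hU, h1, h2⟩
      show s {y | r A y} z
      refine hs B _ z h2 ?_
      intro y hy
      obtain ⟨A', hA', hrA⟩ := h1 y hy
      exact hr A' A y hrA (hU ▸ Set.subset_sUnion_of_mem hA')
    · intro h
      exact ⟨{A}, {y | r A y}, Set.sUnion_singleton A,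
        fun y hy => ⟨A, rfl, hy⟩, h⟩
  · constructor
    · intro h y A hA
      exact h A y hA
    · intro h A y hA
      exact h y hA
end

section
/- A map α : X → UX is of the form α = 𝒰(⊢) for some consequence relation ⊢ on X if and only if η_X(x) ⊆ α(x) and (μ_X ∘ Uα ∘ α)(x) ⊆ α(x) for all x ∈ X, i.e., η_X ≤ α and α*α ≤ α pointwise. -/
/-- `α : X → UX` comes from a consequence relation iff `η_X ≤ α` and
`α*α ≤ α` pointwise. -/
theorem stmt18 {X : Type*} (α : X → UpSet X) :
    (∃ vd : Set X → X → Prop, IsConsRel vd ∧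
        ∀ (x : X) (A : Set X), A ∈ (α x).1 ↔ vd A x) ↔
    (∀ x : X, (etaU x).1 ⊆ (α x).1 ∧ (kleisliU α α x).1 ⊆ (α x).1) := by
  constructor
  · rintro ⟨vd, ⟨hrefl, hwk, hcut⟩, hiff⟩ x
    constructor
    · intro A hA
      exact (hiff x A).2 (hrefl A x hA)
    · intro A hA
      -- hA : {y | A ∈ (α y).1} ∈ (α x).1
      have h : vd {y | vd A y} x := (hiff x _).1 <| by
        have : {y | A ∈ (α y).1} ∈ (α x).1 := hA
        convert this using 2
        ext y; exact (hiff y A).symm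
      exact (hiff x A).2 (hcut A {y | vd A y} x (fun y hy => hy) h)
  · intro h
    refine ⟨fun A x => A ∈ (α x).1, ⟨?_, ?_, ?_⟩, fun x A => Iff.rfl⟩
    · intro A x hx
      exact (h x).1 hx
    · intro A B x hA hAB
      exact (α x).2 hA hAB
    · intro A B x hB hBx
      apply (h x).2
      show sharpSet A ∈ (Umap α (α x)).1
      show {y | A ∈ (α y).1} ∈ (α x).1
      exact (α x).2 hBx hB
end
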